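/- arXiv:1008.0631 — 2 statements merged into one kernel-verified Lean document; each statement's English description precedes it below -/
import Mathlib

section
/- Let 0 → A_k → F_k → F_{k+1} → 0 (k = 0,…,m−1) be a sequence of short exact sequences of chain complexes of finitely generated free ℤ-modules with F_0 = C, such that each H_*(A_k) is torsion-free and each induced map H_*(A_k) → H_*(F_k) is one-free. If H_*(C) is torsion-free, then H_*(F_k) is torsion-free for all k = 0,…,m. -/
/-!
If `p • y = 0` with `p ≠ 0` in `H(F_{k+1})`, then `p • δ y = 0` in the torsion-free `H(A_k)`, so
`δ y = 0` and `y` lifts to some `x ∈ H(F_k)`. Now `p • x` maps to `0`, so it comes from `H(A_k)`,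
and one-freeness puts `x` itself in the image of `H(A_k)`; hence `y = 0`.
-/

open CategoryTheory HomologicalComplex

namespace CategoryTheory.ShortComplex.ShortExact

variable {R ι : Type*} [Ring R] {c : ComplexShape ι}
  {S : ShortComplex (HomologicalComplex (ModuleCat R) c)}

lemma mem_range_homologyMap_g_of_zsmul_eq_zero (hS : S.ShortExact) (n : ι)
    [NoZeroSMulDivisors ℤ (S.X₁.homology (c.next n))] {r : ℤ} (hr : r ≠ 0)
    {y : S.X₃.homology n} (hy : r • y = 0) :
    y ∈ Set.range (HomologicalComplex.homologyMap S.g n) := by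
  by_cases hn : c.Rel n (c.next n)
  · have hδ : hS.δ n _ hn y = 0 := by
      have : r • hS.δ n _ hn y = 0 := by rw [← map_zsmul, hy, map_zero]
      exact (NoZeroSMulDivisors.eq_zero_or_eq_zero_of_smul_eq_zero this).resolve_left hr
    exact (moduleCat_exact_iff _).1 (hS.homology_exact₃ n _ hn) y hδ
  · have : Epi (S.g.f n) := (hS.map_of_exact (HomologicalComplex.eval _ _ n)).epi_g
    have := epi_homologyMap_of_epi_of_not_rel S.g n fun j hj => hn (c.next_eq' hj ▸ hj)
    exact (ModuleCat.epi_iff_surjective _).1 this y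

lemma noZeroSMulDivisors_int_homology_X₃ (hS : S.ShortExact) (n : ι)
    [hX₁ : NoZeroSMulDivisors ℤ (S.X₁.homology (c.next n))]
    (hf : ∀ (r : ℤ) (x : S.X₂.homology n), r ≠ 0 →
      r • x ∈ Set.range (HomologicalComplex.homologyMap S.f n) →
        x ∈ Set.range (HomologicalComplex.homologyMap S.f n)) :
    NoZeroSMulDivisors ℤ (S.X₃.homology n) := by
  refine ⟨fun {r y} hy => or_iff_not_imp_left.2 fun hr => ?_⟩
  obtain ⟨x, rfl⟩ := hS.mem_range_homologyMap_g_of_zsmul_eq_zero n hr hy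
  have hrx : r • x ∈ Set.range (HomologicalComplex.homologyMap S.f n) :=
    (moduleCat_exact_iff _).1 (hS.homology_exact₂ n) _ (by rw [map_zsmul, hy])
  obtain ⟨a, rfl⟩ := hf r x hr hrx
  exact moduleCat_zero_apply (S.map (HomologicalComplex.homologyFunctor _ _ n)) a

end CategoryTheory.ShortComplex.ShortExact

theorem torsionFree_homology_of_filtration_general
    (m : ℕ)
    (F : Fin (m + 1) → ChainComplex (ModuleCat ℤ) ℕ)
    (A : Fin m → ChainComplex (ModuleCat ℤ) ℕ)
    (i : ∀ k : Fin m, A k ⟶ F k.castSucc)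
    (j : ∀ k : Fin m, F k.castSucc ⟶ F k.succ)
    (hinj : ∀ (k : Fin m) (n : ℕ), Function.Injective ((i k).f n))
    (hsurj : ∀ (k : Fin m) (n : ℕ), Function.Surjective ((j k).f n))
    (hexact : ∀ (k : Fin m) (n : ℕ), Function.Exact ((i k).f n) ((j k).f n))
    (hHA : ∀ (k : Fin m) (n : ℕ), NoZeroSMulDivisors ℤ ((A k).homology n))
    (honefree : ∀ (k : Fin m) (n : ℕ) (p : ℤ) (y : (F k.castSucc).homology n), p ≠ 0 →
      p • y ∈ Set.range (homologyMap (i k) n) → y ∈ Set.range (homologyMap (i k) n))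
    (hH0 : ∀ n, NoZeroSMulDivisors ℤ ((F 0).homology n)) :
    ∀ (k : Fin (m + 1)) (n : ℕ), NoZeroSMulDivisors ℤ ((F k).homology n) := by
  intro k n
  cases k using Fin.cases with
  | zero => exact hH0 n
  | succ k =>
    have hzero : i k ≫ j k = 0 := by ext n x; exact (hexact k n).apply_apply_eq_zero x
    have hS : (ShortComplex.mk (i k) (j k) hzero).ShortExact :=
      shortExact_of_degreewise_shortExact _ fun n =>
        ModuleCat.shortComplex_shortExact _ (hexact k n) (hinj k n) (hsurj k n)
    exact hS.noZeroSMulDivisors_int_homology_X₃ n (hX₁ := hHA k _) (honefree k n)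

/-- Filtration argument: given short exact sequences `0 → A_k → F_k → F_{k+1} → 0`
(`k = 0,…,m−1`) of chain complexes of finitely generated free ℤ-modules with each
`H_*(A_k)` torsion free, each induced map `H_*(A_k) → H_*(F_k)` one-free, and
`H_*(F 0)` torsion free, all the homologies `H_*(F_k)` are torsion free. -/
theorem torsionFree_homology_of_filtration
    (m : ℕ)
    (F : Fin (m + 1) → ChainComplex (ModuleCat ℤ) ℕ)
    (A : Fin m → ChainComplex (ModuleCat ℤ) ℕ)
    (i : ∀ k : Fin m, A k ⟶ F k.castSucc)
    (j : ∀ k : Fin m, F k.castSucc ⟶ F k.succ)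
    (hfF : ∀ (k : Fin (m + 1)) (n : ℕ), Module.Free ℤ ((F k).X n))
    (hgF : ∀ (k : Fin (m + 1)) (n : ℕ), Module.Finite ℤ ((F k).X n))
    (hfA : ∀ (k : Fin m) (n : ℕ), Module.Free ℤ ((A k).X n))
    (hgA : ∀ (k : Fin m) (n : ℕ), Module.Finite ℤ ((A k).X n))
    (hinj : ∀ (k : Fin m) (n : ℕ), Function.Injective ((i k).f n))
    (hsurj : ∀ (k : Fin m) (n : ℕ), Function.Surjective ((j k).f n))
    (hexact : ∀ (k : Fin m) (n : ℕ), Function.Exact ((i k).f n) ((j k).f n))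
    (hHA : ∀ (k : Fin m) (n : ℕ), NoZeroSMulDivisors ℤ ((A k).homology n))
    (honefree : ∀ (k : Fin m) (n : ℕ) (p : ℤ) (y : (F k.castSucc).homology n), p ≠ 0 →
      p • y ∈ Set.range (homologyMap (i k) n) → y ∈ Set.range (homologyMap (i k) n))
    (hH0 : ∀ n, NoZeroSMulDivisors ℤ ((F 0).homology n)) :
    ∀ (k : Fin (m + 1)) (n : ℕ), NoZeroSMulDivisors ℤ ((F k).homology n) :=
  torsionFree_homology_of_filtration_general m F A i j hinj hsurj hexact hHA honefree hH0
end

section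
/- Let ∂ be the boundary operator on the Salvetti complex of a finite Coxeter system (W,S), defined on a k-cell E(w,Γ) (w ∈ W, Γ ⊆ S, |Γ| = k) by ∂(E(w,Γ)) = Σ_{s_j∈Γ} Σ_{β ∈ W_Γ^{Γ∖{s_j}}} (−1)^{ℓ(β)+μ(Γ,s_j)} E(wβ, Γ∖{s_j}), where μ(Γ,s_j) = #{s_i ∈ Γ : i ≤ j}. Then ∂ ∘ ∂ = 0. -/
/-!
In `∂∂E(w,Γ)` the cell `E(wu, Γ∖{s_j,s_j'})` arises once for each order of removing `s_j` and
`s_j'`. For `Δ ⊆ Γ' ⊆ Γ` every `u ∈ W_Γ^Δ` factors uniquely as `u = ββ'` with `β ∈ W_Γ^{Γ'}`,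
`β' ∈ W_{Γ'}^Δ` and `ℓ(u) = ℓ(β) + ℓ(β')`, so both orders contribute `±(−1)^{ℓ(u)}`, with signs
`(−1)^{μ(Γ,s_j) + μ(Γ∖{s_j},s_j')}` and `(−1)^{μ(Γ,s_j') + μ(Γ∖{s_j'},s_j)}`; removing the smaller
index first lowers the count of the larger by one, so the two exponents have different parity and
the contributions cancel.

The factorisation rests on the strong exchange condition, obtained from Tits' sign
representation of `W` on `W × {±1}`: for a reflection `t`, the parity of the number of times `t`
occurs in the right inversion sequence of a word for `w` is odd exactly when `ℓ(wt) < ℓ(w)`.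
-/

open scoped Classical

noncomputable section

namespace SalvettiStmt17

variable {m : ℕ} {W : Type*} [Group W] [Fintype W] {M : CoxeterMatrix (Fin m)}

/-- The set `W_Γ^{Γ∖{s_j}}` of minimal left coset representatives of `W_{Γ∖{s_j}}`
in `W_Γ`. -/
def minReps (cs : CoxeterSystem M W) (Γ : Finset (Fin m)) (j : Fin m) : Finset W :=
  Finset.univ.filter (fun β =>
    β ∈ Subgroup.closure (cs.simple '' (Γ : Set (Fin m))) ∧
    ∀ i ∈ Γ.erase j, cs.length β < cs.length (β * cs.simple i))

/-- `μ(Γ, s_j) = #{s_i ∈ Γ : i ≤ j}`. -/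
def mu (Γ : Finset (Fin m)) (j : Fin m) : ℕ := (Γ.filter (fun i => i ≤ j)).card

/-- The Salvetti boundary operator, defined on a cell `E(w,Γ)` by
`∂(E(w,Γ)) = Σ_{s_j∈Γ} Σ_{β ∈ W_Γ^{Γ∖{s_j}}} (−1)^{ℓ(β)+μ(Γ,s_j)} E(wβ, Γ∖{s_j})`. -/
def bdry (cs : CoxeterSystem M W) :
    ((W × Finset (Fin m)) →₀ ℤ) →ₗ[ℤ] ((W × Finset (Fin m)) →₀ ℤ) :=
  Finsupp.lsum ℤ (fun p => LinearMap.toSpanSingleton ℤ _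
    (∑ j ∈ p.2, ∑ β ∈ minReps cs p.2 j,
      ((-1 : ℤ) ^ (cs.length β + mu p.2 j)) •
        Finsupp.single (p.1 * β, p.2.erase j) (1 : ℤ)))

end SalvettiStmt17

namespace CoxeterSystem

open List

variable {B W : Type*} [Group W] {M : CoxeterMatrix B} (cs : CoxeterSystem M W)

local prefix:100 "s" => cs.simple
local prefix:100 "π" => cs.wordProd
local prefix:100 "ℓ" => cs.length
local prefix:100 "ris" => cs.rightInvSeq

theorem simple_mul_mul_simple_eq_simple_iff (i : B) (t : W) : s i * t * s i = s i ↔ t = s i := by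
  constructor
  · intro h
    simpa [mul_assoc] using congrArg (s i * · * s i) h
  · rintro rfl
    simp

/-- Tits' action of `s i` on `W × ℤˣ`. Checking the braid relations for it is what shows that the
parity of the number of occurrences of `t` in the right inversion sequence of a word depends only
on the element of `W` the word represents (`reflSign_wordProd`). -/
def signPerm (i : B) : Equiv.Perm (W × ℤˣ) :=
  Function.Involutive.toPerm (fun p => (s i * p.1 * s i, (if p.1 = s i then -1 else 1) * p.2))
    fun ⟨t, ε⟩ => by
      simp only [simple_mul_mul_simple_eq_simple_iff, Prod.mk.injEq, ← mul_assoc]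
      refine ⟨by simp [mul_assoc], ?_⟩
      split_ifs <;> simp

theorem signPerm_apply (i : B) (t : W) (ε : ℤˣ) :
    cs.signPerm i (t, ε) = (s i * t * s i, (if t = s i then -1 else 1) * ε) := rfl

theorem prod_map_signPerm_apply (ω : List B) (t : W) (ε : ℤˣ) :
    (ω.map cs.signPerm).prod (t, ε) = (π ω * t * (π ω)⁻¹, (-1) ^ (ris ω).count t * ε) := by
  induction ω generalizing t ε with
  | nil => simp
  | cons i ω ih =>
    have hconj : π ω * t * (π ω)⁻¹ = s i ↔ (π ω)⁻¹ * s i * π ω = t := by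
      constructor <;> intro h <;> rw [← h] <;> group
    simp only [map_cons, prod_cons, Equiv.Perm.mul_apply, ih, signPerm_apply, rightInvSeq,
      count_cons, wordProd_cons, hconj, beq_iff_eq, mul_inv_rev, inv_simple, Prod.mk.injEq]
    refine ⟨by group, ?_⟩
    split_ifs <;> simp [pow_succ, mul_comm, mul_left_comm]

theorem rightInvSeq_alternatingWord (i i' : B) (p : ℕ) :
    ris (alternatingWord i i' p) = (range p).reverse.map fun k => (s i' * s i) ^ k * s i' := by
  induction p generalizing i i' with
  | zero => rfl
  | succ p ih =>
    have hsemi : ∀ k : ℕ, s i' * (s i * s i') ^ k = (s i' * s i) ^ k * s i' := fun k =>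
      (SemiconjBy.pow_right (by simp [SemiconjBy, mul_assoc]) k).eq
    rw [alternatingWord_succ, rightInvSeq_concat, ih, range_succ_eq_map]
    simp [map_reverse, hsemi, ← mul_assoc, pow_succ]

theorem signPerm_isLiftable : M.IsLiftable cs.signPerm := by
  intro i i'
  have hword : ∀ k : ℕ, (cs.signPerm i * cs.signPerm i') ^ k
      = ((alternatingWord i i' (2 * k)).map cs.signPerm).prod := by
    intro k
    induction k with
    | zero => rfl
    | succ k ih =>
      rw [show 2 * (k + 1) = 2 * k + 1 + 1 by ring, alternatingWord_succ', alternatingWord_succ',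
        if_neg (by simp), if_pos (by simp)]
      simp [pow_succ', ih, mul_assoc]
  have hperiodic : ∀ k, (s i' * s i) ^ (M i i' + k) * s i' = (s i' * s i) ^ k * s i' := by
    intro k
    rw [pow_add, cs.simple_mul_simple_pow', one_mul]
  have hprod : π (alternatingWord i i' (2 * M i i')) = 1 := by
    simp [prod_alternatingWord_eq_mul_pow]
  refine Equiv.ext fun ⟨t, ε⟩ => ?_
  have hcount : Even ((ris (alternatingWord i i' (2 * M i i'))).count t) := by
    rw [rightInvSeq_alternatingWord, map_reverse, count_reverse, two_mul, range_add, map_append,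
      map_map]
    simp only [Function.comp_def, hperiodic, count_append]
    exact ⟨_, rfl⟩
  rw [hword, prod_map_signPerm_apply, hprod, hcount.neg_one_pow]
  simp

def signRep : W →* Equiv.Perm (W × ℤˣ) := cs.lift ⟨cs.signPerm, cs.signPerm_isLiftable⟩

def reflSign (w t : W) : ℤˣ := (cs.signRep w (t, 1)).2

theorem signRep_wordProd (ω : List B) : cs.signRep (π ω) = (ω.map cs.signPerm).prod := by
  simp [signRep, wordProd, map_list_prod, Function.comp_def]

theorem reflSign_wordProd (ω : List B) (t : W) : cs.reflSign (π ω) t = (-1) ^ (ris ω).count t := by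
  simp [reflSign, signRep_wordProd, prod_map_signPerm_apply]

theorem signRep_apply (w t : W) (ε : ℤˣ) :
    cs.signRep w (t, ε) = (w * t * w⁻¹, cs.reflSign w t * ε) := by
  obtain ⟨ω, rfl⟩ := cs.wordProd_surjective w
  rw [signRep_wordProd, prod_map_signPerm_apply, reflSign_wordProd]

theorem reflSign_mul (u v t : W) :
    cs.reflSign (u * v) t = cs.reflSign v t * cs.reflSign u (v * t * v⁻¹) := by
  simp only [reflSign, map_mul, Equiv.Perm.mul_apply]
  rw [signRep_apply cs v, signRep_apply cs u, signRep_apply cs u]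
  simp [mul_comm]

theorem reflSign_one (t : W) : cs.reflSign 1 t = 1 := by
  simp [reflSign]

theorem reflSign_simple_self (i : B) : cs.reflSign (s i) (s i) = -1 := by
  simp [reflSign, signRep, signPerm_apply]

theorem reflSign_self {t : W} (ht : cs.IsReflection t) : cs.reflSign t t = -1 := by
  obtain ⟨v, i, rfl⟩ := ht
  have hconj : v⁻¹ * (v * s i * v⁻¹) * v⁻¹⁻¹ = s i := by group
  have hinv := cs.reflSign_mul v v⁻¹ (v * s i * v⁻¹)
  rw [mul_inv_cancel, reflSign_one, hconj] at hinv
  rw [reflSign_mul, hconj, reflSign_mul, mul_inv_cancel_right, reflSign_simple_self,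
    mul_left_comm, neg_one_mul, ← hinv]

theorem reflSign_mul_self {w t : W} (ht : cs.IsReflection t) :
    cs.reflSign (w * t) t = -cs.reflSign w t := by
  rw [reflSign_mul, mul_inv_cancel_right, reflSign_self cs ht, neg_one_mul]

theorem mem_rightInvSeq_of_reflSign_eq_neg_one {ω : List B} {t : W}
    (h : cs.reflSign (π ω) t = -1) : t ∈ ris ω := by
  rw [← count_pos_iff, Nat.pos_iff_ne_zero]
  intro hzero
  rw [reflSign_wordProd, hzero, pow_zero] at h
  exact absurd h (by decide)

theorem reflSign_eq_neg_one_iff {w t : W} (ht : cs.IsReflection t) :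
    cs.reflSign w t = -1 ↔ ℓ (w * t) < ℓ w := by
  have hdesc : ∀ w : W, cs.reflSign w t = -1 → ℓ (w * t) < ℓ w := by
    intro w hw
    obtain ⟨ω, hω, rfl⟩ := cs.exists_isReduced w
    exact (cs.isRightInversion_of_mem_rightInvSeq hω
      (cs.mem_rightInvSeq_of_reflSign_eq_neg_one hw)).2
  refine ⟨hdesc w, fun hlt => ?_⟩
  rcases Int.units_eq_one_or (cs.reflSign w t) with h | h
  · have := hdesc (w * t) (by rw [reflSign_mul_self cs ht, h])
    rw [mul_assoc, ht.mul_self, mul_one] at this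
    omega
  · exact h

theorem reflSign_eq_one_iff {w t : W} (ht : cs.IsReflection t) :
    cs.reflSign w t = 1 ↔ ℓ w < ℓ (w * t) := by
  have hiff := cs.reflSign_eq_neg_one_iff (w := w) ht
  have hne := ht.length_mul_left_ne w
  rcases Int.units_eq_one_or (cs.reflSign w t) with h | h <;> rw [h] at hiff ⊢
  · have : ¬ ℓ (w * t) < ℓ w := hiff.not.mp (by decide)
    exact iff_of_true rfl (by omega)
  · exact iff_of_false (by decide) (by have := hiff.mp rfl; omega)

theorem exists_wordProd_mul_eq_wordProd_eraseIdx {ω : List B} {t : W} (ht : cs.IsReflection t)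
    (h : ℓ (π ω * t) < ℓ (π ω)) : ∃ j < ω.length, π ω * t = π (ω.eraseIdx j) := by
  obtain ⟨j, hj, rfl⟩ := mem_iff_getElem.mp
    (cs.mem_rightInvSeq_of_reflSign_eq_neg_one ((cs.reflSign_eq_neg_one_iff ht).mpr h))
  rw [length_rightInvSeq] at hj
  refine ⟨j, hj, ?_⟩
  rw [← cs.wordProd_mul_getD_rightInvSeq, getD_eq_getElem]

section Parabolic

variable {X : Set B}

def parabolicSubgroup (X : Set B) : Subgroup W := Subgroup.closure (cs.simple '' X)

theorem simple_mem_parabolicSubgroup {i : B} (hi : i ∈ X) : s i ∈ cs.parabolicSubgroup X :=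
  Subgroup.subset_closure ⟨i, hi, rfl⟩

theorem exists_wordProd_eq_of_mem_parabolicSubgroup {w : W} (hw : w ∈ cs.parabolicSubgroup X) :
    ∃ ω : List B, (∀ i ∈ ω, i ∈ X) ∧ π ω = w := by
  induction hw using Subgroup.closure_induction with
  | mem _ hx =>
    obtain ⟨i, hi, rfl⟩ := hx
    exact ⟨[i], by simpa using hi, wordProd_singleton cs i⟩
  | one => exact ⟨[], by simp, wordProd_nil cs⟩
  | mul _ _ _ _ ihx ihy =>
    obtain ⟨ω₁, h₁, rfl⟩ := ihx
    obtain ⟨ω₂, h₂, rfl⟩ := ihy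
    exact ⟨ω₁ ++ ω₂, by simpa [or_imp, forall_and] using And.intro h₁ h₂, wordProd_append cs _ _⟩
  | inv _ _ ihx =>
    obtain ⟨ω, h, rfl⟩ := ihx
    exact ⟨ω.reverse, by simpa using h, wordProd_reverse cs ω⟩

theorem exists_isReduced_sublist (ω : List B) :
    ∃ ω' : List B, ω' <+ ω ∧ cs.IsReduced ω' ∧ π ω' = π ω := by
  induction ω using List.reverseRecOn with
  | nil => exact ⟨[], Sublist.refl _, by simp [IsReduced], rfl⟩
  | append_singleton ω i ih =>
    obtain ⟨ω', hsub, hred, hprod⟩ := ih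
    rcases cs.length_mul_simple (π ω') i with hup | hdown
    · refine ⟨ω' ++ [i], hsub.append (Sublist.refl _), ?_, by simp [wordProd_append, hprod]⟩
      rw [IsReduced, wordProd_append, wordProd_singleton, hup, hred.eq, length_append,
        length_singleton]
    · obtain ⟨k, hk, hk_eq⟩ :=
        cs.exists_wordProd_mul_eq_wordProd_eraseIdx (ω := ω') (cs.isReflection_simple i) (by omega)
      refine ⟨ω'.eraseIdx k, ((eraseIdx_sublist ω' k).trans hsub).trans (sublist_append_left _ _),
        ?_, by rw [← hk_eq, hprod, wordProd_append, wordProd_singleton]⟩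
      have := length_eraseIdx_add_one hk
      rw [IsReduced, ← hk_eq]
      have := hred.eq
      omega

theorem exists_isReduced_of_mem_parabolicSubgroup {w : W} (hw : w ∈ cs.parabolicSubgroup X) :
    ∃ ω : List B, (∀ i ∈ ω, i ∈ X) ∧ cs.IsReduced ω ∧ π ω = w := by
  obtain ⟨ω, hω, rfl⟩ := cs.exists_wordProd_eq_of_mem_parabolicSubgroup hw
  obtain ⟨ω', hsub, hred, hprod⟩ := cs.exists_isReduced_sublist ω
  exact ⟨ω', fun i hi => hω i (hsub.subset hi), hred, hprod⟩

theorem exists_length_mul_simple_lt_of_mem_parabolicSubgroup {w : W}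
    (hw : w ∈ cs.parabolicSubgroup X) (hw₁ : w ≠ 1) : ∃ i ∈ X, ℓ (w * s i) < ℓ w := by
  obtain ⟨ω, hω, hred, rfl⟩ := cs.exists_isReduced_of_mem_parabolicSubgroup hw
  rcases eq_nil_or_concat ω with rfl | ⟨ω₀, i, rfl⟩
  · exact absurd (wordProd_nil cs) hw₁
  refine ⟨i, hω i (by simp), ?_⟩
  have := cs.length_wordProd_le ω₀
  rw [hred.eq, wordProd_concat, mul_assoc, simple_mul_simple_self, mul_one, length_concat]
  omega

theorem parabolicSubgroup_mono {Y : Set B} (h : X ⊆ Y) :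
    cs.parabolicSubgroup X ≤ cs.parabolicSubgroup Y :=
  Subgroup.closure_mono (Set.image_mono h)

theorem length_mul_eq_of_forall_length_le {β : W}
    (hβ : ∀ d ∈ cs.parabolicSubgroup X, ℓ β ≤ ℓ (β * d)) {v : W}
    (hv : v ∈ cs.parabolicSubgroup X) : ℓ (β * v) = ℓ β + ℓ v := by
  induction hn : ℓ v generalizing v with
  | zero => rw [cs.length_eq_zero_iff.mp hn, mul_one, add_zero]
  | succ n ih =>
    obtain ⟨i, hi, hlt⟩ := cs.exists_length_mul_simple_lt_of_mem_parabolicSubgroup hv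
      (by rintro rfl; simp at hn)
    obtain ⟨v', rfl⟩ : ∃ v', v = v' * s i := ⟨v * s i, by simp [mul_assoc]⟩
    rw [simple_mul_simple_cancel_right] at hlt
    have hv' : v' ∈ cs.parabolicSubgroup X := by
      simpa [mul_assoc] using mul_mem hv (cs.simple_mem_parabolicSubgroup hi)
    have hlen' : ℓ v' = n := by rcases cs.length_mul_simple v' i with h | h <;> omega
    rcases cs.length_mul_simple (β * v') i with hup | hdown
    · rw [← mul_assoc, hup, ih hv' hlen']
      omega
    · -- a descent of `β v'` at `s i` would be a descent of `β` at the reflection `v' s_i v'⁻¹ ∈ W_X`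
      have hsign := (cs.reflSign_eq_neg_one_iff (cs.isReflection_simple i)).mpr
        (show ℓ (β * v' * s i) < ℓ (β * v') by omega)
      rw [reflSign_mul, (cs.reflSign_eq_one_iff (cs.isReflection_simple i)).mpr hlt, one_mul,
        cs.reflSign_eq_neg_one_iff ((cs.isReflection_simple i).conj v')] at hsign
      have := hβ _ (mul_mem (mul_mem hv' (cs.simple_mem_parabolicSubgroup hi)) (inv_mem hv'))
      omega

theorem exists_forall_length_mul_le (X : Set B) (u : W) :
    ∃ d ∈ cs.parabolicSubgroup X, ∀ d' ∈ cs.parabolicSubgroup X, ℓ (u * d) ≤ ℓ (u * d') :=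
  ⟨_, Function.argminOn_mem _ _ ⟨1, one_mem _⟩,
    fun _ hd' => Function.argminOn_le (fun d => ℓ (u * d)) _ hd'⟩

def IsMinCosetRep (X : Set B) (w : W) : Prop := ∀ i ∈ X, ℓ w < ℓ (w * s i)

theorem exists_isMinCosetRep_mul_eq (X : Set B) (u : W) :
    ∃ β v, cs.IsMinCosetRep X β ∧ v ∈ cs.parabolicSubgroup X ∧ β * v = u := by
  obtain ⟨d, hd, hmin⟩ := cs.exists_forall_length_mul_le X u
  refine ⟨u * d, d⁻¹, fun i hi => ?_, inv_mem hd, by group⟩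
  have := hmin _ (mul_mem hd (cs.simple_mem_parabolicSubgroup hi))
  have := cs.length_mul_simple_ne (u * d) i
  rw [← mul_assoc] at *
  omega

theorem IsMinCosetRep.length_mul {β : W} (hβ : cs.IsMinCosetRep X β) {v : W}
    (hv : v ∈ cs.parabolicSubgroup X) : ℓ (β * v) = ℓ β + ℓ v := by
  obtain ⟨d, hd, hmin⟩ := cs.exists_forall_length_mul_le X β
  have hadd : ∀ v ∈ cs.parabolicSubgroup X, ℓ (β * d * v) = ℓ (β * d) + ℓ v :=
    fun v hv => cs.length_mul_eq_of_forall_length_le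
      (fun d' hd' => by rw [mul_assoc]; exact hmin _ (mul_mem hd hd')) hv
  obtain rfl : d = 1 := by
    by_contra hd₁
    obtain ⟨i, hi, hlt⟩ :=
      cs.exists_length_mul_simple_lt_of_mem_parabolicSubgroup (inv_mem hd) (inv_ne_one.mpr hd₁)
    have h₁ := hadd _ (mul_mem (inv_mem hd) (cs.simple_mem_parabolicSubgroup hi))
    have h₂ := hadd _ (inv_mem hd)
    rw [← mul_assoc, mul_inv_cancel_right] at h₁
    rw [mul_inv_cancel_right] at h₂
    have := hβ i hi
    omega
  simpa using hadd v hv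

theorem IsMinCosetRep.eq_of_mul_eq_mul {β₁ β₂ v₁ v₂ : W} (hβ₁ : cs.IsMinCosetRep X β₁)
    (hβ₂ : cs.IsMinCosetRep X β₂) (hv₁ : v₁ ∈ cs.parabolicSubgroup X)
    (hv₂ : v₂ ∈ cs.parabolicSubgroup X) (h : β₁ * v₁ = β₂ * v₂) : β₁ = β₂ := by
  have hd : v₂ * v₁⁻¹ ∈ cs.parabolicSubgroup X := mul_mem hv₂ (inv_mem hv₁)
  have hβ : β₁ = β₂ * (v₂ * v₁⁻¹) := by rw [← mul_assoc, ← h, mul_inv_cancel_right]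
  have e₁ := hβ₂.length_mul cs hd
  have e₂ := hβ₁.length_mul cs (inv_mem hd)
  rw [hβ, mul_inv_cancel_right, length_inv] at e₂
  rw [hβ, (cs.length_eq_zero_iff (w := v₂ * v₁⁻¹)).mp (by omega), mul_one]

end Parabolic

section MinCosetReps

variable [Fintype W]

def minCosetReps (Γ Δ : Finset B) : Finset W :=
  Finset.univ.filter fun u => u ∈ cs.parabolicSubgroup Γ ∧ cs.IsMinCosetRep Δ u

theorem mem_minCosetReps {Γ Δ : Finset B} {u : W} :
    u ∈ cs.minCosetReps Γ Δ ↔ u ∈ cs.parabolicSubgroup Γ ∧ cs.IsMinCosetRep Δ u := by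
  simp [minCosetReps]

theorem length_mul_of_mem_minCosetReps {Γ Γ' Δ : Finset B} {β β' : W}
    (hβ : β ∈ cs.minCosetReps Γ Γ') (hβ' : β' ∈ cs.minCosetReps Γ' Δ) :
    ℓ (β * β') = ℓ β + ℓ β' :=
  ((cs.mem_minCosetReps.mp hβ).2).length_mul cs (cs.mem_minCosetReps.mp hβ').1

/-- `W_Γ^Δ = W_Γ^{Γ'} · W_{Γ'}^Δ`, uniquely, for `Δ ⊆ Γ' ⊆ Γ`. -/
theorem sum_minCosetReps_mul {α : Type*} [AddCommMonoid α] {Γ Γ' Δ : Finset B} (hΔ : Δ ⊆ Γ')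
    (hΓ' : Γ' ⊆ Γ) (f : W → α) :
    ∑ β ∈ cs.minCosetReps Γ Γ', ∑ β' ∈ cs.minCosetReps Γ' Δ, f (β * β') =
      ∑ u ∈ cs.minCosetReps Γ Δ, f u := by
  have hmono := cs.parabolicSubgroup_mono (Finset.coe_subset.mpr hΓ')
  rw [← Finset.sum_product']
  refine Finset.sum_bij (fun p _ => p.1 * p.2) ?_ ?_ ?_ (fun _ _ => rfl)
  · rintro ⟨β, β'⟩ hp
    obtain ⟨hβ, hβ'⟩ := Finset.mem_product.mp hp
    obtain ⟨hβΓ, hβmin⟩ := cs.mem_minCosetReps.mp hβ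
    obtain ⟨hβ'Γ', hβ'min⟩ := cs.mem_minCosetReps.mp hβ'
    refine cs.mem_minCosetReps.mpr ⟨mul_mem hβΓ (hmono hβ'Γ'), fun i hi => ?_⟩
    have hsi := cs.simple_mem_parabolicSubgroup (X := (Γ' : Set B)) (hΔ hi)
    rw [mul_assoc, hβmin.length_mul cs (mul_mem hβ'Γ' hsi), hβmin.length_mul cs hβ'Γ']
    exact Nat.add_lt_add_left (hβ'min i hi) _
  · rintro ⟨β₁, β₁'⟩ hp₁ ⟨β₂, β₂'⟩ hp₂ h
    obtain ⟨hβ₁, hβ₁'⟩ := Finset.mem_product.mp hp₁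
    obtain ⟨hβ₂, hβ₂'⟩ := Finset.mem_product.mp hp₂
    have hβ := ((cs.mem_minCosetReps.mp hβ₁).2).eq_of_mul_eq_mul cs (cs.mem_minCosetReps.mp hβ₂).2
      (cs.mem_minCosetReps.mp hβ₁').1 (cs.mem_minCosetReps.mp hβ₂').1 h
    subst hβ
    exact Prod.ext rfl (mul_left_cancel h)
  · intro u hu
    obtain ⟨huΓ, humin⟩ := cs.mem_minCosetReps.mp hu
    obtain ⟨β, v, hβ, hv, rfl⟩ := cs.exists_isMinCosetRep_mul_eq Γ' u
    refine ⟨(β, v), Finset.mem_product.mpr ⟨cs.mem_minCosetReps.mpr ⟨?_, hβ⟩,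
      cs.mem_minCosetReps.mpr ⟨hv, fun i hi => ?_⟩⟩, rfl⟩
    · simpa using mul_mem huΓ (inv_mem (hmono hv))
    · have hsi := cs.simple_mem_parabolicSubgroup (X := (Γ' : Set B)) (hΔ hi)
      have := humin i hi
      rwa [mul_assoc, hβ.length_mul cs (mul_mem hv hsi), hβ.length_mul cs hv,
        Nat.add_lt_add_iff_left] at this

end MinCosetReps

end CoxeterSystem

theorem Finset.sum_sum_erase_eq_zero {ι A : Type*} [DecidableEq ι] [AddCommMonoid A]
    (s : Finset ι) (f : ι → ι → A) (h : ∀ a ∈ s, ∀ b ∈ s, a ≠ b → f a b + f b a = 0) :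
    ∑ a ∈ s, ∑ b ∈ s.erase a, f a b = 0 := by
  rw [Finset.sum_sigma']
  refine Finset.sum_involution (fun p _ => ⟨p.2, p.1⟩) (fun p hp => ?_) (fun p hp _ => ?_)
    (fun p hp => ?_) (fun _ _ => rfl)
  all_goals obtain ⟨ha, hb⟩ := Finset.mem_sigma.mp hp
  · exact h _ ha _ (Finset.mem_of_mem_erase hb) (Finset.ne_of_mem_erase hb).symm
  · exact fun heq => Finset.ne_of_mem_erase hb (congrArg Sigma.fst heq)
  · exact Finset.mem_sigma.mpr ⟨Finset.mem_of_mem_erase hb,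
      Finset.mem_erase.mpr ⟨Finset.ne_of_mem_erase hb |>.symm, ha⟩⟩

theorem Int.neg_one_pow_add_neg_one_pow_of_odd {a b : ℕ} (h : Odd (a + b)) :
    (-1 : ℤ) ^ a + (-1) ^ b = 0 := by
  rcases Nat.even_or_odd a with ha | ha
  · rw [ha.neg_one_pow, ((Nat.odd_add'.mp h).mpr ha).neg_one_pow, add_neg_cancel]
  · rw [ha.neg_one_pow, ((Nat.odd_add.mp h).mp ha).neg_one_pow, neg_add_cancel]

namespace SalvettiStmt17

variable {m : ℕ} {W : Type*} [Group W] [Fintype W] {M : CoxeterMatrix (Fin m)}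

theorem minReps_eq (cs : CoxeterSystem M W) (Γ : Finset (Fin m)) (j : Fin m) :
    minReps cs Γ j = cs.minCosetReps Γ (Γ.erase j) := by
  ext β
  simp only [minReps, CoxeterSystem.mem_minCosetReps, Finset.mem_filter, Finset.mem_univ,
    true_and, CoxeterSystem.IsMinCosetRep, CoxeterSystem.parabolicSubgroup, Finset.mem_coe]

theorem mu_erase_add {Γ : Finset (Fin m)} {x : Fin m} (hx : x ∈ Γ) (y : Fin m) :
    mu (Γ.erase x) y + (if x ≤ y then 1 else 0) = mu Γ y := by
  unfold mu
  rw [Finset.filter_erase]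
  split_ifs with h
  · exact Finset.card_erase_add_one (Finset.mem_filter.mpr ⟨hx, h⟩)
  · rw [add_zero, Finset.erase_eq_of_notMem]
    simp [h]

theorem odd_mu_add_mu_erase_add {Γ : Finset (Fin m)} {j j' : Fin m} (hj : j ∈ Γ) (hj' : j' ∈ Γ)
    (hne : j ≠ j') : Odd (mu Γ j + mu (Γ.erase j) j' + (mu Γ j' + mu (Γ.erase j') j)) := by
  have h₁ := mu_erase_add hj j'
  have h₂ := mu_erase_add hj' j
  rw [Nat.odd_iff]
  rcases hne.lt_or_gt with h | h
  · rw [if_pos h.le] at h₁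
    rw [if_neg (not_le.mpr h)] at h₂
    omega
  · rw [if_neg (not_le.mpr h)] at h₁
    rw [if_pos h.le] at h₂
    omega

theorem bdry_single (cs : CoxeterSystem M W) (w : W) (Γ : Finset (Fin m)) :
    bdry cs (Finsupp.single (w, Γ) 1) = ∑ j ∈ Γ, ∑ β ∈ minReps cs Γ j,
      (-1 : ℤ) ^ (cs.length β + mu Γ j) • Finsupp.single (w * β, Γ.erase j) 1 := by
  rw [bdry, Finsupp.lsum_single, LinearMap.toSpanSingleton_apply_one]

def bdryBdryTerm (cs : CoxeterSystem M W) (w : W) (Γ : Finset (Fin m)) (j j' : Fin m) :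
    (W × Finset (Fin m)) →₀ ℤ :=
  ∑ u ∈ cs.minCosetReps Γ ((Γ.erase j).erase j'),
    (-1 : ℤ) ^ (cs.length u + (mu Γ j + mu (Γ.erase j) j')) •
      Finsupp.single (w * u, (Γ.erase j).erase j') 1

theorem bdry_bdry_single (cs : CoxeterSystem M W) (w : W) (Γ : Finset (Fin m)) :
    bdry cs (bdry cs (Finsupp.single (w, Γ) 1)) =
      ∑ j ∈ Γ, ∑ j' ∈ Γ.erase j, bdryBdryTerm cs w Γ j j' := by
  rw [bdry_single, map_sum]
  refine Finset.sum_congr rfl fun j _ => ?_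
  simp only [map_sum, map_smul, bdry_single, minReps_eq, Finset.smul_sum, smul_smul, ← pow_add]
  rw [Finset.sum_comm]
  refine Finset.sum_congr rfl fun j' _ => ?_
  rw [bdryBdryTerm, ← cs.sum_minCosetReps_mul (Finset.erase_subset _ _) (Finset.erase_subset _ _)]
  refine Finset.sum_congr rfl fun β hβ => Finset.sum_congr rfl fun β' hβ' => ?_
  rw [cs.length_mul_of_mem_minCosetReps hβ hβ', mul_assoc]
  congr 2
  ring

theorem bdryBdryTerm_add_swap (cs : CoxeterSystem M W) (w : W) {Γ : Finset (Fin m)} {j j' : Fin m}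
    (hj : j ∈ Γ) (hj' : j' ∈ Γ) (hne : j ≠ j') :
    bdryBdryTerm cs w Γ j j' + bdryBdryTerm cs w Γ j' j = 0 := by
  rw [bdryBdryTerm, bdryBdryTerm, Finset.erase_right_comm (a := j'), ← Finset.sum_add_distrib]
  refine Finset.sum_eq_zero fun u _ => ?_
  rw [← add_smul, Int.neg_one_pow_add_neg_one_pow_of_odd, zero_smul]
  have := odd_mu_add_mu_erase_add hj hj' hne
  rw [Nat.odd_iff] at this ⊢
  omega

/-- The Salvetti boundary operator squares to zero: `∂ ∘ ∂ = 0`. -/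
theorem bdry_comp_bdry (cs : CoxeterSystem M W) : bdry cs ∘ₗ bdry cs = 0 := by
  refine Finsupp.lhom_ext' fun p => LinearMap.ext_ring ?_
  simp only [LinearMap.comp_apply, LinearMap.zero_comp, LinearMap.zero_apply, Finsupp.lsingle_apply]
  rw [bdry_bdry_single]
  exact Finset.sum_sum_erase_eq_zero _ _ fun j hj j' hj' hne => bdryBdryTerm_add_swap cs _ hj hj' hne

end SalvettiStmt17
end
end
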